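/- Correctness of the reduction from punctual reachability games to reachability games on decreasing temporal graphs: let G = (V, E) be a static game with V partitioned into V₁, V₂, let v ∈ V be a vertex with no outgoing edges, and let T ∈ ℕ. Define the temporal game G' on V' = V ∪ {w, ⊤, ⊥} (three fresh vertices) with V'₁ = (V₁ ∖ {v}) ∪ {w} and V'₂ = V' ∖ V'₁, and edge availabilities: for each (s,t) ∈ E, s →_x t iff x ≤ T+1; v →_x ⊥ iff x ≤ T−1; v →_x w iff x ≤ T+1; w →_x ⊤ iff x ≤ T+1; ⊤ and ⊥ have no outgoing edges. Then every edge of G' is decreasing, and for every u ∈ V: Player 1 wins the temporal reachability game on G' with target set {⊤} from position (u, 0) if and only if Player 1 wins the punctual reachability game on G with target vertex v and target time T from u. -/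
import Mathlib


/-!
A temporal graph: vertex set `V`, time-indexed edge relation `E t u v` (edge from `u` to `v`
available at time `t`).  `P1 v` means vertex `v` is controlled by Player 1.  A play from
position `(u,k)` is a maximal sequence of positions `(v₀,k), (v₁,k+1), …` following available
edges, where the owner of the current vertex chooses the next one; the play halts at a
position whose owner has no available edge.

`P1WinsReach E P1 F u k` : Player 1 wins the reachability game with target set `F` from
position `(u, k)`, i.e. she has a strategy (assigning to each position `(v,t)` with `v ∈ V₁`
that has at least one available edge an available successor) such that every maximal play
from `(u,k)` consistent with it — infinite, or halting at a position with no available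
edge — visits `F`.
-/
def P1WinsReach {V : Type*} (E : ℕ → V → V → Prop) (P1 : V → Prop) (F : Set V)
    (u : V) (k : ℕ) : Prop :=
  ∃ σ : V → ℕ → V,
    (∀ (v : V) (t : ℕ), k ≤ t → P1 v → (∃ w, E t v w) → E t v (σ v t)) ∧
    (∀ ρ : ℕ → V, ρ 0 = u →
      (∀ i, E (k + i) (ρ i) (ρ (i + 1))) →
      (∀ i, P1 (ρ i) → ρ (i + 1) = σ (ρ i) (k + i)) →
      ∃ i, ρ i ∈ F) ∧
    (∀ (ρ : ℕ → V) (n : ℕ), ρ 0 = u →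
      (∀ i < n, E (k + i) (ρ i) (ρ (i + 1))) →
      (∀ i < n, P1 (ρ i) → ρ (i + 1) = σ (ρ i) (k + i)) →
      (∀ w, ¬ E (k + n) (ρ n) w) →
      ∃ i ≤ n, ρ i ∈ F)

/-!
`PunctualWins Es P1 v T u` : in the punctual reachability game on the static game with
edge relation `Es` (Player-1 vertices given by `P1`), target vertex `v` and target time
`T`, Player 1 wins from `u`: she has a strategy (assigning to each position `(s,t)` with
`s ∈ V₁` that has an outgoing edge one of its successors) such that every maximal play
from `u` at time `0` consistent with it — infinite, or halting at a vertex with no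
outgoing edge — visits `v` at time exactly `T`.
-/
def PunctualWins {V : Type*} (Es : V → V → Prop) (P1 : V → Prop) (v : V) (T : ℕ)
    (u : V) : Prop :=
  ∃ σ : V → ℕ → V,
    (∀ (s : V) (t : ℕ), P1 s → (∃ w, Es s w) → Es s (σ s t)) ∧
    (∀ ρ : ℕ → V, ρ 0 = u →
      (∀ i, Es (ρ i) (ρ (i + 1))) →
      (∀ i, P1 (ρ i) → ρ (i + 1) = σ (ρ i) i) →
      ρ T = v) ∧
    (∀ (ρ : ℕ → V) (n : ℕ), ρ 0 = u →
      (∀ i < n, Es (ρ i) (ρ (i + 1))) →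
      (∀ i < n, P1 (ρ i) → ρ (i + 1) = σ (ρ i) i) →
      (∀ w, ¬ Es (ρ n) w) →
      T ≤ n ∧ ρ T = v)

/-!
Reduction from a punctual reachability game on a static game `G = (V, Es)` with target
vertex `v` (having no outgoing edges) and target time `T` to a reachability game on a
decreasing temporal graph `G'`.  The vertex set of `G'` is `V ⊕ Fin 3`, with the three
fresh vertices `w = Sum.inr 0`, `⊤ = Sum.inr 1`, `⊥ = Sum.inr 2`.

Edge availabilities (`decE`): for each edge `(s,t)` of `G`, `s →_x t` iff `x ≤ T+1`;
`v →_x ⊥` iff `x ≤ T-1` (i.e. `x < T`); `v →_x w` iff `x ≤ T+1`; `w →_x ⊤` iff `x ≤ T+1`;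
`⊤` and `⊥` have no outgoing edges.

Ownership (`decP1`): `V'₁ = (V₁ \ {v}) ∪ {w}`, `V'₂` is the rest.
-/
def decE {V : Type*} (Es : V → V → Prop) (v : V) (T : ℕ) :
    ℕ → (V ⊕ Fin 3) → (V ⊕ Fin 3) → Prop := fun x a b =>
  match a, b with
  | Sum.inl s, Sum.inl t => Es s t ∧ x ≤ T + 1
  | Sum.inl s, Sum.inr j => s = v ∧ ((j = (2 : Fin 3) ∧ x < T) ∨ (j = (0 : Fin 3) ∧ x ≤ T + 1))
  | Sum.inr j, Sum.inr j' => j = (0 : Fin 3) ∧ j' = (1 : Fin 3) ∧ x ≤ T + 1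
  | Sum.inr _, Sum.inl _ => False

def decP1 {V : Type*} (P1 : V → Prop) (v : V) : (V ⊕ Fin 3) → Prop := fun a =>
  match a with
  | Sum.inl s => P1 s ∧ s ≠ v
  | Sum.inr j => j = (0 : Fin 3)

section Aux

variable {V : Type*}

lemma decE_le (Es : V → V → Prop) (v : V) (T x : ℕ) (a b : V ⊕ Fin 3)
    (h : decE Es v T x a b) : x ≤ T + 1 := by
  rcases a with s | j <;> rcases b with t | j' <;> simp only [decE] at h
  · exact h.2
  · rcases h.2 with ⟨_, h2⟩ | ⟨_, h2⟩ <;> omega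
  · exact h.2.2

open Classical in
noncomputable def stepFn (Es : V → V → Prop) (P1 : V → Prop) (σ : V → ℕ → V) : V → ℕ → V :=
  fun s t => if h : ∃ w, Es s w then (if P1 s then σ s t else h.choose) else s

lemma stepFn_spec (Es : V → V → Prop) (P1 : V → Prop) (σ : V → ℕ → V)
    (hσ1 : ∀ s t, P1 s → (∃ w, Es s w) → Es s (σ s t))
    (s : V) (t : ℕ) (hex : ∃ w, Es s w) :
    Es s (stepFn Es P1 σ s t) ∧ (P1 s → stepFn Es P1 σ s t = σ s t) := by
  unfold stepFn
  rw [dif_pos hex]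
  by_cases hp : P1 s
  · rw [if_pos hp]; exact ⟨hσ1 s t hp hex, fun _ => rfl⟩
  · rw [if_neg hp]; exact ⟨hex.choose_spec, fun h => absurd h hp⟩

noncomputable def extFn (Es : V → V → Prop) (P1 : V → Prop) (σ : V → ℕ → V)
    (ρ : ℕ → V) (N : ℕ) : ℕ → V
  | 0 => ρ 0
  | (i+1) => if i + 1 ≤ N then ρ (i+1) else stepFn Es P1 σ (extFn Es P1 σ ρ N i) i

/-- Key lemma: with a winning punctual strategy (for target `v` with no outgoing edges),
every consistent play prefix has length at most `T`. -/
lemma prefix_short (Es : V → V → Prop) (P1 : V → Prop) (v : V)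
    (hv : ∀ t, ¬ Es v t) (T : ℕ) (u : V) (σ : V → ℕ → V)
    (hσ1 : ∀ s t, P1 s → (∃ w, Es s w) → Es s (σ s t))
    (hσ2 : ∀ ρ : ℕ → V, ρ 0 = u → (∀ i, Es (ρ i) (ρ (i + 1))) →
      (∀ i, P1 (ρ i) → ρ (i + 1) = σ (ρ i) i) → ρ T = v)
    (hσ3 : ∀ (ρ : ℕ → V) (n : ℕ), ρ 0 = u → (∀ i < n, Es (ρ i) (ρ (i + 1))) →
      (∀ i < n, P1 (ρ i) → ρ (i + 1) = σ (ρ i) i) → (∀ w, ¬ Es (ρ n) w) →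
      T ≤ n ∧ ρ T = v)
    (ρ : ℕ → V) (N : ℕ) (h0 : ρ 0 = u)
    (hE : ∀ i < N, Es (ρ i) (ρ (i + 1)))
    (hC : ∀ i < N, P1 (ρ i) → ρ (i + 1) = σ (ρ i) i) : N ≤ T := by
  classical
  by_contra hlt
  push_neg at hlt
  set ext : ℕ → V := extFn Es P1 σ ρ N with hext
  have hagree : ∀ i, i ≤ N → ext i = ρ i := by
    intro i hi
    cases i with
    | zero => rfl
    | succ i => rw [hext]; rw [extFn, if_pos hi]
  have key : ∀ i, ((∃ w, Es (ext i) w) → Es (ext i) (ext (i + 1))) ∧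
      ((∃ w, Es (ext i) w) → P1 (ext i) → ext (i + 1) = σ (ext i) i) := by
    intro i
    by_cases hi : i + 1 ≤ N
    · have e1 : ext (i + 1) = ρ (i + 1) := hagree _ hi
      have e0 : ext i = ρ i := hagree _ (by omega)
      rw [e0, e1]
      exact ⟨fun _ => hE i (by omega), fun _ hp => hC i (by omega) hp⟩
    · have e1 : ext (i + 1) = stepFn Es P1 σ (ext i) i := by
        rw [hext]; rw [extFn, if_neg hi]
      rw [e1]
      exact ⟨fun hex => (stepFn_spec Es P1 σ hσ1 _ _ hex).1,
        fun hex hp => (stepFn_spec Es P1 σ hσ1 _ _ hex).2 hp⟩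
  have hext0 : ext 0 = u := by rw [hagree 0 (Nat.zero_le _), h0]
  have hTN : T ≤ N := by omega
  have hextT : ext T = ρ T := hagree T hTN
  have hedgeT : Es (ρ T) (ρ (T + 1)) := hE T hlt
  by_cases hinf : ∀ i, ∃ w, Es (ext i) w
  · have hTv := hσ2 ext hext0 (fun i => (key i).1 (hinf i)) (fun i hp => (key i).2 (hinf i) hp)
    rw [hextT] at hTv
    rw [hTv] at hedgeT
    exact hv _ hedgeT
  · push_neg at hinf
    have hinf' : ∃ m, ∀ w, ¬ Es (ext m) w := hinf
    set m := Nat.find hinf' with hm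
    have hspec : ∀ w, ¬ Es (ext m) w := Nat.find_spec hinf'
    have hmin : ∀ i, i < m → ∃ w, Es (ext i) w := by
      intro i hi
      have := Nat.find_min hinf' hi
      push_neg at this
      exact this
    obtain ⟨hTm, hTv⟩ := hσ3 ext m hext0 (fun i hi => (key i).1 (hmin i hi))
      (fun i hi hp => (key i).2 (hmin i hi) hp) hspec
    rw [hextT] at hTv
    rw [hTv] at hedgeT
    exact hv _ hedgeT

def pushfwd (σ : V → ℕ → V) : (V ⊕ Fin 3) → ℕ → (V ⊕ Fin 3) := fun a t =>
  match a with
  | Sum.inl s => Sum.inl (σ s t)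
  | Sum.inr _ => Sum.inr 1

@[simp] lemma pushfwd_inl (σ : V → ℕ → V) (s : V) (t : ℕ) :
    pushfwd σ (Sum.inl s) t = Sum.inl (σ s t) := rfl

@[simp] lemma pushfwd_inr (σ : V → ℕ → V) (j : Fin 3) (t : ℕ) :
    pushfwd σ (Sum.inr j) t = Sum.inr 1 := rfl

open Classical in
noncomputable def pullback (Es : V → V → Prop) (v : V) (T : ℕ)
    (σ' : (V ⊕ Fin 3) → ℕ → (V ⊕ Fin 3)) : V → ℕ → V := fun s t =>
  if h : ∃ w, Es s w then
    if t ≤ T + 1 then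
      match σ' (Sum.inl s) t with
      | Sum.inl t' => t'
      | Sum.inr _ => h.choose
    else h.choose
  else s

lemma pullback_eq (Es : V → V → Prop) (v : V) (T : ℕ)
    (σ' : (V ⊕ Fin 3) → ℕ → (V ⊕ Fin 3)) (s t' : V) (t : ℕ)
    (h : ∃ w, Es s w) (ht : t ≤ T + 1) (heq : σ' (Sum.inl s) t = Sum.inl t') :
    pullback Es v T σ' s t = t' := by
  unfold pullback
  rw [dif_pos h, if_pos ht, heq]

end Aux
/-- Correctness of the reduction from punctual reachability games to reachability games on
decreasing temporal graphs: every edge of `G'` is decreasing, and for every `u ∈ V`,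
Player 1 wins the temporal reachability game on `G'` with target set `{⊤}` from `(u, 0)`
iff she wins the punctual reachability game on `G` with target vertex `v` and target
time `T` from `u`. -/
theorem punctual_to_decreasing_reduction
    {V : Type*} (Es : V → V → Prop) (P1 : V → Prop) (v : V)
    (hv : ∀ t : V, ¬ Es v t) (T : ℕ) :
    (∀ (a b : V ⊕ Fin 3) (x : ℕ), decE Es v T (x + 1) a b → decE Es v T x a b) ∧
    (∀ u : V,
      P1WinsReach (decE Es v T) (decP1 P1 v) {Sum.inr (1 : Fin 3)} (Sum.inl u) 0 ↔
      PunctualWins Es P1 v T u) := by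
  constructor
  · rintro (s | j) (t | j') x h <;> simp only [decE] at h ⊢
    · exact ⟨h.1, by omega⟩
    · obtain ⟨h1, h2⟩ := h
      refine ⟨h1, ?_⟩
      rcases h2 with ⟨hj, hx⟩ | ⟨hj, hx⟩
      · exact Or.inl ⟨hj, by omega⟩
      · exact Or.inr ⟨hj, by omega⟩
    · exact ⟨h.1, h.2.1, by omega⟩
  intro u
  constructor
  · -- temporal winning → punctual winning
    rintro ⟨σ', hσ'1, hσ'2, hσ'3⟩
    classical
    have hσ'val : ∀ (s : V) (t : ℕ), P1 s → s ≠ v → t ≤ T + 1 → (∃ w, Es s w) →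
        ∃ t', σ' (Sum.inl s) t = Sum.inl t' ∧ Es s t' := by
      intro s t hp hsv ht hex
      obtain ⟨w, hw⟩ := hex
      have h1 := hσ'1 (Sum.inl s) t (Nat.zero_le t) (by simp only [decP1]; exact ⟨hp, hsv⟩)
        ⟨Sum.inl w, by simp only [decE]; exact ⟨hw, ht⟩⟩
      cases h : σ' (Sum.inl s) t with
      | inl t' =>
        rw [h] at h1
        simp only [decE] at h1
        exact ⟨t', rfl, h1.1⟩
      | inr j =>
        rw [h] at h1
        simp only [decE] at h1
        exact absurd h1.1 hsv
    refine ⟨pullback Es v T σ', ?_, ?_, ?_⟩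
    · -- legality of the pulled-back strategy
      intro s t hp hex
      have hsv : s ≠ v := by
        rintro rfl
        exact hv hex.choose hex.choose_spec
      by_cases ht : t ≤ T + 1
      · obtain ⟨t', heq, hEt⟩ := hσ'val s t hp hsv ht hex
        rw [pullback_eq Es v T σ' s t' t hex ht heq]
        exact hEt
      · have hpb : pullback Es v T σ' s t = hex.choose := by
          unfold pullback
          rw [dif_pos hex, if_neg ht]
        rw [hpb]
        exact hex.choose_spec
    all_goals (
      have htrans : ∀ (s t : V) (i : ℕ), i ≤ T + 1 → Es s t →
          (P1 s → t = pullback Es v T σ' s i) →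
          decP1 P1 v (Sum.inl s) → Sum.inl t = σ' (Sum.inl s) i := by
        intro s t i hi hEst hcons hp
        simp only [decP1] at hp
        obtain ⟨t', heq, _⟩ := hσ'val s i hp.1 hp.2 hi ⟨t, hEst⟩
        rw [heq, hcons hp.1, pullback_eq Es v T σ' s t' i ⟨t, hEst⟩ hi heq]
      have hlong : ∀ ρ : ℕ → V, ρ 0 = u → (∀ i < T + 2, Es (ρ i) (ρ (i + 1))) →
          (∀ i < T + 2, P1 (ρ i) → ρ (i + 1) = pullback Es v T σ' (ρ i) i) → False := by
        intro ρ h0 hE hC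
        obtain ⟨i, _, hi⟩ := hσ'3 (fun i => Sum.inl (ρ i)) (T + 2) (by simp only [h0])
          (fun i hilt => by
            simp only [Nat.zero_add, decE]
            exact ⟨hE i hilt, by omega⟩)
          (fun i hilt hp => by
            simp only [Nat.zero_add]
            exact htrans (ρ i) (ρ (i + 1)) i (by omega) (hE i hilt) (hC i hilt) hp)
          (fun b hb => by
            have := decE_le Es v T _ _ _ hb
            omega)
        simp at hi)
    · -- infinite plays
      intro ρ h0 hEs hCs
      exact (hlong ρ h0 (fun i _ => hEs i) (fun i _ => hCs i)).elim
    · -- halting plays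
      intro ρ n h0 hEs hCs hhalt
      have hn : n ≤ T + 1 := by
        by_contra hgt
        push_neg at hgt
        exact hlong ρ h0 (fun i hi => hEs i (by omega)) (fun i hi => hCs i (by omega))
      have hedges : ∀ i, i < n → decE Es v T (0 + i) (Sum.inl (ρ i)) (Sum.inl (ρ (i + 1))) := by
        intro i hi
        simp only [Nat.zero_add, decE]
        exact ⟨hEs i hi, by omega⟩
      have hcons : ∀ i, i < n → decP1 P1 v (Sum.inl (ρ i)) →
          Sum.inl (ρ (i + 1)) = σ' (Sum.inl (ρ i)) (0 + i) := by
        intro i hi hp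
        simp only [Nat.zero_add]
        exact htrans (ρ i) (ρ (i + 1)) i (by omega) (hEs i hi) (hCs i hi) hp
      have hnv : ρ n = v := by
        by_contra hne
        obtain ⟨i, _, hi⟩ := hσ'3 (fun i => Sum.inl (ρ i)) n (by simp only [h0])
          (fun i hi => hedges i hi) (fun i hi hp => hcons i hi hp)
          (by
            rintro (t | j) hb <;> simp only [Nat.zero_add, decE] at hb
            · exact hhalt t hb.1
            · exact hne hb.1)
        simp at hi
      have hTn : T ≤ n := by
        by_contra hlt2
        push_neg at hlt2
        obtain ⟨i, hile, hi⟩ := hσ'3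
          (fun i => if i ≤ n then Sum.inl (ρ i) else Sum.inr 2) (n + 1)
          (by simp [h0])
          (fun i hi => by
            rcases Nat.lt_or_ge i n with h | h
            · simp only [if_pos (by omega : i ≤ n), if_pos (by omega : i + 1 ≤ n)]
              exact hedges i h
            · have hin : i = n := by omega
              subst hin
              simp only [if_pos (le_refl i), if_neg (by omega : ¬ i + 1 ≤ i), hnv]
              simp only [Nat.zero_add, decE]
              exact ⟨trivial, Or.inl ⟨trivial, by omega⟩⟩)
          (fun i hi hp => by
            rcases Nat.lt_or_ge i n with h | h
            · simp only [if_pos (by omega : i ≤ n), if_pos (by omega : i + 1 ≤ n)] at hp ⊢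
              exact hcons i h hp
            · have hin : i = n := by omega
              subst hin
              simp only [if_pos (le_refl i), hnv, decP1] at hp
              exact absurd rfl hp.2)
          (by
            simp only [if_neg (by omega : ¬ n + 1 ≤ n)]
            rintro (t | j) hb <;> simp only [Nat.zero_add, decE] at hb
            exact absurd hb.1 (by decide))
        rcases Nat.lt_or_ge i (n + 1) with h | h
        · simp only [if_pos (by omega : i ≤ n)] at hi
          simp at hi
        · have : i = n + 1 := by omega
          subst this
          simp only [if_neg (by omega : ¬ n + 1 ≤ n), Set.mem_singleton_iff] at hi
          exact absurd (Sum.inr.inj hi) (by decide)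
      have hnT : n ≤ T := by
        by_contra hgt2
        push_neg at hgt2
        obtain ⟨i, hile, hi⟩ := hσ'3
          (fun i => if i ≤ n then Sum.inl (ρ i) else Sum.inr 0) (n + 1)
          (by simp [h0])
          (fun i hi => by
            rcases Nat.lt_or_ge i n with h | h
            · simp only [if_pos (by omega : i ≤ n), if_pos (by omega : i + 1 ≤ n)]
              exact hedges i h
            · have hin : i = n := by omega
              subst hin
              simp only [if_pos (le_refl i), if_neg (by omega : ¬ i + 1 ≤ i), hnv]
              simp only [Nat.zero_add, decE]
              exact ⟨trivial, Or.inr ⟨trivial, by omega⟩⟩)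
          (fun i hi hp => by
            rcases Nat.lt_or_ge i n with h | h
            · simp only [if_pos (by omega : i ≤ n), if_pos (by omega : i + 1 ≤ n)] at hp ⊢
              exact hcons i h hp
            · have hin : i = n := by omega
              subst hin
              simp only [if_pos (le_refl i), hnv, decP1] at hp
              exact absurd rfl hp.2)
          (by
            simp only [if_neg (by omega : ¬ n + 1 ≤ n)]
            rintro (t | j) hb <;> simp only [Nat.zero_add, decE] at hb
            omega)
        rcases Nat.lt_or_ge i (n + 1) with h | h
        · simp only [if_pos (by omega : i ≤ n)] at hi
          simp at hi
        · have : i = n + 1 := by omega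
          subst this
          simp only [if_neg (by omega : ¬ n + 1 ≤ n), Set.mem_singleton_iff] at hi
          exact absurd (Sum.inr.inj hi) (by decide)
      exact ⟨hTn, by rw [show T = n from le_antisymm hTn hnT]; exact hnv⟩
  · -- punctual winning → temporal winning
    rintro ⟨σ, hσ1, hσ2, hσ3⟩
    classical
    refine ⟨pushfwd σ, ?_, ?_, ?_⟩
    · rintro (s | j) t - hp hex
      · simp only [decP1] at hp
        obtain ⟨b, hb⟩ := hex
        rcases b with t' | j'
        · simp only [decE] at hb
          rw [pushfwd_inl]
          simp only [decE]
          exact ⟨hσ1 s t hp.1 ⟨t', hb.1⟩, hb.2⟩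
        · simp only [decE] at hb
          exact absurd hb.1 hp.2
      · simp only [decP1] at hp
        obtain ⟨b, hb⟩ := hex
        rcases b with t' | j'
        · simp only [decE] at hb
        · simp only [decE] at hb
          rw [pushfwd_inr]
          simp only [decE]
          exact ⟨hp, trivial, hb.2.2⟩
    · intro ρ' h0 hE _
      exact absurd (decE_le Es v T _ _ _ (hE (T + 2))) (by omega)
    · intro ρ' n h0 hE hC hhalt
      simp only [Nat.zero_add] at hE hC hhalt
      set ρ : ℕ → V := fun i => Sum.elim id (fun _ => u) (ρ' i) with hρ
      have h0' : ρ 0 = u := by simp [hρ, h0]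
      by_cases hall : ∀ i, i ≤ n → ∃ s, ρ' i = Sum.inl s
      · exfalso
        have hcomp : ∀ i, i ≤ n → ρ' i = Sum.inl (ρ i) := by
          intro i hi
          obtain ⟨s, hs⟩ := hall i hi
          simp only [hρ, hs, Sum.elim_inl, id_eq]
        have hEs : ∀ i, i < n → Es (ρ i) (ρ (i + 1)) := by
          intro i hi
          have h := hE i hi
          rw [hcomp i (by omega), hcomp (i + 1) (by omega)] at h
          simp only [decE] at h
          exact h.1
        have hne : ∀ i, i < n → ρ i ≠ v := fun i hi h => hv _ (h ▸ hEs i hi)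
        have hCs : ∀ i, i < n → P1 (ρ i) → ρ (i + 1) = σ (ρ i) i := by
          intro i hi hp
          have h := hC i hi (by
            rw [hcomp i (by omega)]
            simp only [decP1]
            exact ⟨hp, hne i hi⟩)
          rw [hcomp i (by omega), hcomp (i + 1) (by omega), pushfwd_inl] at h
          exact Sum.inl.inj h
        have hnT : n ≤ T := prefix_short Es P1 v hv T u σ hσ1 hσ2 hσ3 ρ n h0' hEs hCs
        have hnv : ρ n ≠ v := by
          intro h
          apply hhalt (Sum.inr 0)
          rw [hcomp n le_rfl, h]
          simp only [decE]
          exact ⟨trivial, Or.inr ⟨trivial, by omega⟩⟩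
        have hnoedge : ∀ w, ¬ Es (ρ n) w := by
          intro w hw
          apply hhalt (Sum.inl w)
          rw [hcomp n le_rfl]
          simp only [decE]
          exact ⟨hw, by omega⟩
        obtain ⟨hTn, hTv⟩ := hσ3 ρ n h0' hEs hCs hnoedge
        exact hnv (by rw [show n = T from le_antisymm hnT hTn]; exact hTv)
      · push_neg at hall
        have hexj : ∃ i, i ≤ n ∧ ∀ s, ρ' i ≠ Sum.inl s := hall
        obtain ⟨hjn, hjinr⟩ := Nat.find_spec hexj
        set j := Nat.find hexj with hjdef
        have hjpos : 0 < j := by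
          rcases Nat.eq_zero_or_pos j with h | h
          · exfalso; apply hjinr u; rw [h]; exact h0
          · exact h
        obtain ⟨m, hm⟩ : ∃ m, j = m + 1 := ⟨j - 1, by omega⟩
        have hinl : ∀ i, i < j → ∃ s, ρ' i = Sum.inl s := by
          intro i hi
          have hnotP := Nat.find_min hexj hi
          push_neg at hnotP
          exact hnotP (by omega)
        have hcomp : ∀ i, i < j → ρ' i = Sum.inl (ρ i) := by
          intro i hi
          obtain ⟨s, hs⟩ := hinl i hi
          simp only [hρ, hs, Sum.elim_inl, id_eq]
        obtain ⟨j₀, hj₀⟩ : ∃ j₀, ρ' j = Sum.inr j₀ := by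
          cases h : ρ' j with
          | inl s => exact absurd h (hjinr s)
          | inr j₀ => exact ⟨j₀, rfl⟩
        rw [hm] at hj₀
        have hEs : ∀ i, i < m → Es (ρ i) (ρ (i + 1)) := by
          intro i hi
          have h := hE i (by omega)
          rw [hcomp i (by omega), hcomp (i + 1) (by omega)] at h
          simp only [decE] at h
          exact h.1
        have hne : ∀ i, i < m → ρ i ≠ v := fun i hi h => hv _ (h ▸ hEs i hi)
        have hCs : ∀ i, i < m → P1 (ρ i) → ρ (i + 1) = σ (ρ i) i := by
          intro i hi hp
          have h := hC i (by omega) (by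
            rw [hcomp i (by omega)]
            simp only [decP1]
            exact ⟨hp, hne i hi⟩)
          rw [hcomp i (by omega), hcomp (i + 1) (by omega), pushfwd_inl] at h
          exact Sum.inl.inj h
        have hedge := hE m (by omega)
        rw [hcomp m (by omega), hj₀] at hedge
        simp only [decE] at hedge
        obtain ⟨hTm, _⟩ := hσ3 ρ m (by simp [hρ, h0]) hEs hCs (by rw [hedge.1]; exact hv)
        have hmT : m ≤ T := prefix_short Es P1 v hv T u σ hσ1 hσ2 hσ3 ρ m h0' hEs hCs
        have hmTeq : m = T := le_antisymm hmT hTm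
        rcases hedge.2 with ⟨_, hlt⟩ | ⟨hj0, _⟩
        · omega
        · rcases Nat.lt_or_ge (m + 1) n with hlt | hge
          · have h := hC (m + 1) hlt (by rw [hj₀, hj0]; simp only [decP1])
            rw [hj₀, hj0, pushfwd_inr] at h
            exact ⟨m + 1 + 1, by omega, by rw [h]; rfl⟩
          · exfalso
            have hn_eq : n = m + 1 := by omega
            apply hhalt (Sum.inr 1)
            rw [hn_eq, hj₀, hj0]
            simp only [decE]
            exact ⟨trivial, trivial, by omega⟩
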